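/- arXiv:2605.14470 — 5 statements merged into one kernel-verified Lean document; each statement's English description precedes it below -/
import Mathlib

section
/- Let X be a ringed space, F a coherent O_X-module, I ⊆ O_X a finitely generated ideal sheaf, and x ∈ X a point such that the stalk I_x is generated by an F_x-regular sequence. Then there is an open neighborhood U of x such that I|_U is generated by an F|_U-regular sequence of global sections over U. -/
open CategoryTheory TopologicalSpace Opposite

universe u

variable (X : TopCat.{u}) (O : TopCat.Presheaf CommRingCat.{u} X)
  (F : TopCat.Presheaf AddCommGrpCat.{u} X)
  [∀ U : (Opens X)ᵒᵖ, Module (O.obj U) (F.obj U)]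
  (I : ∀ U : (Opens X)ᵒᵖ, Ideal (O.obj U))

/-- The germs at `y` of the sections `f j` generate the stalk `I_y`: every local section of
`I` is, on some smaller neighbourhood of `y`, an `O`-linear combination of the `f j`. -/
def LocallyGeneratesAt {c : ℕ} {U : Opens X} (f : Fin c → O.obj (op U)) (y : X) : Prop :=
  ∀ (V : Opens X), y ∈ V → ∀ a : O.obj (op V), a ∈ I (op V) →
    ∃ (W : Opens X) (_ : y ∈ W) (hWV : W ≤ V) (hWU : W ≤ U)
      (r : Fin c → O.obj (op W)),
      O.map (homOfLE hWV).op a = ∑ j, r j * O.map (homOfLE hWU).op (f j)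

/-- The germs at `y` of the sections `f j` form an `F_y`-regular sequence: for each `i`,
multiplication by (the germ of) `f i` is injective on `F_y / (f_1, …, f_{i-1}) F_y`.  This is
phrased elementarily in terms of germs of sections. -/
def RegularSeqAt {c : ℕ} {U : Opens X} (f : Fin c → O.obj (op U)) (y : X) : Prop :=
  ∀ (i : Fin c) (V : Opens X), y ∈ V → ∀ (hVU : V ≤ U) (m : F.obj (op V)),
    (∃ (W : Opens X) (_ : y ∈ W) (hWV : W ≤ V) (mm : Fin c → F.obj (op W)),
        O.map (homOfLE (hWV.trans hVU)).op (f i) • F.map (homOfLE hWV).op m =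
          ∑ j ∈ Finset.univ.filter (fun j : Fin c => j < i),
            O.map (homOfLE (hWV.trans hVU)).op (f j) • mm j) →
    ∃ (W : Opens X) (_ : y ∈ W) (hWV : W ≤ V) (mm : Fin c → F.obj (op W)),
      F.map (homOfLE hWV).op m =
        ∑ j ∈ Finset.univ.filter (fun j : Fin c => j < i),
          O.map (homOfLE (hWV.trans hVU)).op (f j) • mm j

/-! Generation: near `x` the finitely many generators `g` of `I` are combinations of the `f`,
so the `f` generate `I` wherever the `g` do.

Regularity, one index `i` at a time: as `F` is coherent, the `O`-module of relations
`∑_{k ≤ i} f_k g_k = 0` among sections of `F` is generated near `x` by finitely many relations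
`G_l`. Regularity at `x` puts every `G_l i` into `(f_k)_{k < i} F` on a neighbourhood `N` of `x`.
At `y ∈ N`, a relation `f_i m = ∑_{k < i} f_k m_k` extends to a relation with `i`-th component
`m`, which is near `y` a combination of the `G_l`; hence so is `m`, and `m ∈ (f_k)_{k < i} F`. -/

open Topology

theorem TopologicalSpace.Opens.exists_le_mem_forall_of_antitone {α ι : Type*}
    [TopologicalSpace α] [Finite ι] {P : ι → Opens α → Prop} (hP : ∀ l, Antitone (P l))
    {y : α} {V : Opens α} (hy : y ∈ V) (h : ∀ l, ∃ W, y ∈ W ∧ P l W) :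
    ∃ W ≤ V, y ∈ W ∧ ∀ l, P l W := by
  have := Fintype.ofFinite ι
  choose W hyW hPW using h
  have hyW' : y ∈ Finset.univ.inf W := by
    rw [← SetLike.mem_coe, Opens.coe_finset_inf, Finset.inf_eq_iInf]
    simpa using hyW
  exact ⟨V ⊓ Finset.univ.inf W, inf_le_left, ⟨hy, hyW'⟩,
    fun l => hP l (inf_le_right.trans (Finset.inf_le (Finset.mem_univ l))) (hPW l)⟩

theorem TopCat.Presheaf.map_homOfLE_map_homOfLE {X : TopCat} {C : Type*} [Category C]
    {FC : C → C → Type*} {CC : C → Type*} [∀ X Y, FunLike (FC X Y) (CC X) (CC Y)]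
    [ConcreteCategory C FC] (P : TopCat.Presheaf C X) {U V W : Opens X} (h₁ : V ≤ U)
    (h₂ : W ≤ V) (m : ToType (P.obj (op U))) :
    P.map (homOfLE h₂).op (P.map (homOfLE h₁).op m) = P.map (homOfLE (h₂.trans h₁)).op m :=
  TopCat.Presheaf.restrict_restrict h₂ h₁ m

theorem Finset.sum_prod_smul_smul {R M κ ι : Type*} [CommSemiring R] [AddCommMonoid M]
    [Module R M] [Fintype κ] [Fintype ι] (r : κ × ι → R) (a : κ → R) (s : ι → M) :
    ∑ p, r p • a p.1 • s p.2 = ∑ k, a k • ∑ j, r (k, j) • s j := by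
  simp only [Fintype.sum_prod_type, Finset.smul_sum, smul_comm (a _)]

theorem Fin.sum_ite_le_smul_eq_zero_iff {R M : Type*} [Semiring R] [AddCommGroup M] [Module R M]
    {c : ℕ} (i : Fin c) (b : Fin c → R) (g : Fin c → M) :
    ∑ k, (if k ≤ i then b k else 0) • g k = 0 ↔
      b i • g i = ∑ k ∈ Finset.univ.filter (fun k : Fin c => k < i), b k • -g k := by
  have : Finset.univ.filter (fun k : Fin c => k ≤ i) =
      insert i (Finset.univ.filter (fun k : Fin c => k < i)) := by
    ext k; simp [le_iff_lt_or_eq, or_comm]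
  simp only [ite_smul, zero_smul, ← Finset.sum_filter, this, smul_neg, Finset.sum_neg_distrib]
  rw [Finset.sum_insert (by simp), add_eq_zero_iff_eq_neg]

section

variable {X}

def SMulCompatible : Prop :=
  ∀ {U V : (Opens X)ᵒᵖ} (h : U ⟶ V) (r : O.obj U) (m : F.obj U),
    F.map h (r • m) = O.map h r • F.map h m

def SpansLocally {U : Opens X} {n : ℕ} (s : Fin n → F.obj (op U)) : Prop :=
  ∀ (V : Opens X) (hVU : V ≤ U) (m : F.obj (op V)) (y : X), y ∈ V →
    ∃ (W : Opens X) (_ : y ∈ W) (hWV : W ≤ V) (r : Fin n → O.obj (op W)),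
      F.map (homOfLE hWV).op m = ∑ j, r j • F.map (homOfLE (hWV.trans hVU)).op (s j)

/-- `κ` generates the kernel of `O^ι|_W → F|_W`, `r ↦ ∑ j, r j • s j`. -/
def GeneratesRelations {ι : Type*} [Fintype ι] {U W : Opens X} (hWU : W ≤ U)
    (s : ι → F.obj (op U)) {mm : ℕ} (κ : Fin mm → ι → O.obj (op W)) : Prop :=
  (∀ l, ∑ j, κ l j • F.map (homOfLE hWU).op (s j) = 0) ∧
    ∀ (V : Opens X) (hVW : V ≤ W) (r : ι → O.obj (op V)),
      (∑ j, r j • F.map (homOfLE (hVW.trans hWU)).op (s j) = 0) →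
      ∀ (y : X), y ∈ V →
        ∃ (W' : Opens X) (_ : y ∈ W') (hW'V : W' ≤ V) (a : Fin mm → O.obj (op W')),
          ∀ j, O.map (homOfLE hW'V).op (r j) =
            ∑ l, a l * O.map (homOfLE (hW'V.trans hVW)).op (κ l j)

def RelationsFiniteType : Prop :=
  ∀ (U : Opens X) (nn : ℕ) (s : Fin nn → F.obj (op U)) (x : X), x ∈ U →
    ∃ (W : Opens X) (_ : x ∈ W) (hWU : W ≤ U) (mm : ℕ) (κ : Fin mm → Fin nn → O.obj (op W)),
      GeneratesRelations O F hWU s κ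

def RestrictsIntoSpan {c : ℕ} {U V W : Opens X} (f : Fin c → O.obj (op U)) (S : Finset (Fin c))
    (hWU : W ≤ U) (hWV : W ≤ V) (m : F.obj (op V)) : Prop :=
  ∃ mm : Fin c → F.obj (op W),
    F.map (homOfLE hWV).op m = ∑ j ∈ S, O.map (homOfLE hWU).op (f j) • mm j

/-- The germ of `m` at `y` lies in `∑_{j ∈ S} f_j F_y`. -/
def IsLocallyInSpan {c : ℕ} {U V : Opens X} (f : Fin c → O.obj (op U)) (S : Finset (Fin c))
    (hVU : V ≤ U) (m : F.obj (op V)) (y : X) : Prop :=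
  ∃ (W : Opens X) (_ : y ∈ W) (hWV : W ≤ V), RestrictsIntoSpan O F f S (hWV.trans hVU) hWV m

/-- `f i` is a nonzerodivisor on `F_y / (f_j)_{j < i} F_y`. -/
def IsRegularStepAt {c : ℕ} {U : Opens X} (f : Fin c → O.obj (op U)) (i : Fin c) (y : X) : Prop :=
  ∀ (V : Opens X), y ∈ V → ∀ (hVU : V ≤ U) (m : F.obj (op V)),
    IsLocallyInSpan O F f (Finset.univ.filter (fun j : Fin c => j < i)) hVU
        (O.map (homOfLE hVU).op (f i) • m) y →
      IsLocallyInSpan O F f (Finset.univ.filter (fun j : Fin c => j < i)) hVU m y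

variable {O F I}

open TopCat.Presheaf

theorem SMulCompatible.map_sum_smul (hcomp : SMulCompatible O F) {ι : Type*} (S : Finset ι)
    {U V : (Opens X)ᵒᵖ} (h : U ⟶ V) (r : ι → O.obj U) (m : ι → F.obj U) :
    F.map h (∑ j ∈ S, r j • m j) = ∑ j ∈ S, O.map h (r j) • F.map h (m j) := by
  simp only [map_sum, hcomp h]

theorem regularSeqAt_iff (hcomp : SMulCompatible O F) {c : ℕ} {U : Opens X}
    (f : Fin c → O.obj (op U)) (y : X) :
    RegularSeqAt X O F f y ↔ ∀ i, IsRegularStepAt O F f i y := by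
  simp only [RegularSeqAt, IsRegularStepAt, IsLocallyInSpan, RestrictsIntoSpan, hcomp _,
    map_homOfLE_map_homOfLE]

theorem RestrictsIntoSpan.mono (hcomp : SMulCompatible O F) {c : ℕ} {U V W W' : Opens X}
    {f : Fin c → O.obj (op U)} {S : Finset (Fin c)} {hWU : W ≤ U} {hWV : W ≤ V}
    {m : F.obj (op V)} (h : RestrictsIntoSpan O F f S hWU hWV m) (hW'W : W' ≤ W) :
    RestrictsIntoSpan O F f S (hW'W.trans hWU) (hW'W.trans hWV) m := by
  obtain ⟨mm, hmm⟩ := h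
  refine ⟨fun j => F.map (homOfLE hW'W).op (mm j), ?_⟩
  simpa only [hcomp.map_sum_smul, map_homOfLE_map_homOfLE] using
    congrArg (F.map (homOfLE hW'W).op) hmm

theorem isLocallyInSpan_restrict_iff {c : ℕ} {U U' V : Opens X} (f : Fin c → O.obj (op U))
    (hU'U : U' ≤ U) (S : Finset (Fin c)) (hVU' : V ≤ U') (m : F.obj (op V)) (y : X) :
    IsLocallyInSpan O F (fun j => O.map (homOfLE hU'U).op (f j)) S hVU' m y ↔
      IsLocallyInSpan O F f S (hVU'.trans hU'U) m y := by
  simp only [IsLocallyInSpan, RestrictsIntoSpan, map_homOfLE_map_homOfLE]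

theorem IsRegularStepAt.restrict {c : ℕ} {U U' : Opens X} {f : Fin c → O.obj (op U)} {i : Fin c}
    {y : X} (h : IsRegularStepAt O F f i y) (hU'U : U' ≤ U) :
    IsRegularStepAt O F (fun j => O.map (homOfLE hU'U).op (f j)) i y := by
  intro V hyV hVU' m
  simp only [isLocallyInSpan_restrict_iff, map_homOfLE_map_homOfLE]
  exact h V hyV (hVU'.trans hU'U) m

theorem LocallyGeneratesAt.restrict {c : ℕ} {U U' : Opens X} {f : Fin c → O.obj (op U)} {y : X}
    (h : LocallyGeneratesAt X O I f y) (hU'U : U' ≤ U) (hy : y ∈ U') :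
    LocallyGeneratesAt X O I (fun j => O.map (homOfLE hU'U).op (f j)) y := by
  intro V hyV a ha
  obtain ⟨W, hyW, hWV, hWU, r, hr⟩ := h V hyV a ha
  refine ⟨W ⊓ U', ⟨hyW, hy⟩, inf_le_left.trans hWV, inf_le_right,
    fun j => O.map (homOfLE inf_le_left).op (r j), ?_⟩
  simpa only [map_sum, map_mul, map_homOfLE_map_homOfLE] using
    congrArg (O.map (homOfLE (inf_le_left : W ⊓ U' ≤ W)).op) hr

theorem SpansLocally.restrict {U U' : Opens X} {n : ℕ}
    {s : Fin n → F.obj (op U)} (hs : SpansLocally O F s) (hU'U : U' ≤ U) :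
    SpansLocally O F (fun j => F.map (homOfLE hU'U).op (s j)) := by
  intro V hVU' m y hy
  simpa only [map_homOfLE_map_homOfLE] using hs V (hVU'.trans hU'U) m y hy

theorem SpansLocally.exists_nhds_forall_eq_sum (hcomp : SMulCompatible O F) {U : Opens X} {n : ℕ}
    {s : Fin n → F.obj (op U)} (hs : SpansLocally O F s) {κ : Type*} [Finite κ] {V : Opens X}
    (hVU : V ≤ U) (m : κ → F.obj (op V)) {y : X} (hy : y ∈ V) :
    ∃ (W : Opens X) (_ : y ∈ W) (hWV : W ≤ V) (r : κ → Fin n → O.obj (op W)),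
      ∀ k, F.map (homOfLE hWV).op (m k) =
        ∑ j, r k j • F.map (homOfLE (hWV.trans hVU)).op (s j) := by
  have hmono : ∀ k, Antitone fun W : Opens X => ∃ (hWV : W ≤ V) (r : Fin n → O.obj (op W)),
      F.map (homOfLE hWV).op (m k) = ∑ j, r j • F.map (homOfLE (hWV.trans hVU)).op (s j) := by
    rintro k W₁ W₂ h ⟨hWV, r, hr⟩
    refine ⟨h.trans hWV, fun j => O.map (homOfLE h).op (r j), ?_⟩
    simpa only [hcomp.map_sum_smul, map_homOfLE_map_homOfLE] using
      congrArg (F.map (homOfLE h).op) hr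
  obtain ⟨W, hWV, hyW, hW⟩ := Opens.exists_le_mem_forall_of_antitone hmono hy fun k => by
    obtain ⟨W, hyW, hWV, r, hr⟩ := hs V hVU (m k) y hy
    exact ⟨W, hyW, hWV, r, hr⟩
  choose _ r hr using hW
  exact ⟨W, hyW, hWV, r, hr⟩

theorem RelationsFiniteType.exists_generatesRelations (hker : RelationsFiniteType O F)
    {ι : Type*} [Fintype ι] {U : Opens X} (s : ι → F.obj (op U)) {x : X} (hx : x ∈ U) :
    ∃ (W : Opens X) (_ : x ∈ W) (hWU : W ≤ U) (mm : ℕ) (κ : Fin mm → ι → O.obj (op W)),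
      GeneratesRelations O F hWU s κ := by
  let e := Fintype.equivFin ι
  obtain ⟨W, hxW, hWU, mm, κ, hκ, hgen⟩ := hker U _ (s ∘ e.symm) x hx
  refine ⟨W, hxW, hWU, mm, fun l j => κ l (e j), fun l => ?_, fun V hVW r hr y hy => ?_⟩
  · simpa only [← e.sum_comp, Function.comp_apply, e.symm_apply_apply] using hκ l
  · obtain ⟨W', hyW', hW'V, a, ha⟩ :=
      hgen V hVW (r ∘ e.symm) (by simpa [← e.sum_comp] using hr) y hy
    exact ⟨W', hyW', hW'V, a, fun j => by simpa using ha (e j)⟩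

theorem exists_generators_ker_sum_smul (hcomp : SMulCompatible O F)
    (hker : RelationsFiniteType O F) {U : Opens X} {n : ℕ} {s : Fin n → F.obj (op U)}
    (hs : SpansLocally O F s) {κ : Type*} [Fintype κ] (a : κ → O.obj (op U)) {x : X}
    (hx : x ∈ U) :
    ∃ (W : Opens X) (_ : x ∈ W) (hWU : W ≤ U) (mm : ℕ) (G : Fin mm → κ → F.obj (op W)),
      (∀ l, ∑ k, O.map (homOfLE hWU).op (a k) • G l k = 0) ∧
      ∀ (V : Opens X) (hVW : V ≤ W) (g : κ → F.obj (op V)),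
        ∑ k, O.map (homOfLE (hVW.trans hWU)).op (a k) • g k = 0 → ∀ y ∈ V,
          ∃ (W' : Opens X) (_ : y ∈ W') (hW'V : W' ≤ V) (α : Fin mm → O.obj (op W')),
            ∀ k, F.map (homOfLE hW'V).op (g k) =
              ∑ l, α l • F.map (homOfLE (hW'V.trans hVW)).op (G l k) := by
  have hsum : ∀ {V : Opens X} (hVU : V ≤ U) (r : κ × Fin n → O.obj (op V)),
      ∑ p, r p • F.map (homOfLE hVU).op (a p.1 • s p.2) =
        ∑ k, O.map (homOfLE hVU).op (a k) • ∑ j, r (k, j) • F.map (homOfLE hVU).op (s j) := by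
    intro V hVU r
    simp only [hcomp _]
    exact Finset.sum_prod_smul_smul r (fun k => O.map (homOfLE hVU).op (a k))
      fun j => F.map (homOfLE hVU).op (s j)
  obtain ⟨W, hxW, hWU, mm, ρ, hρ, hρgen⟩ :=
    hker.exists_generatesRelations (fun p : κ × Fin n => a p.1 • s p.2) hx
  refine ⟨W, hxW, hWU, mm, fun l k => ∑ j, ρ l (k, j) • F.map (homOfLE hWU).op (s j),
    fun l => by simpa only [hsum] using hρ l, fun V hVW g hg y hy => ?_⟩
  obtain ⟨W₁, hyW₁, hW₁V, r, hr⟩ := hs.exists_nhds_forall_eq_sum hcomp (hVW.trans hWU) g hy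
  have hrel : ∑ p : κ × Fin n, r p.1 p.2 •
      F.map (homOfLE ((hW₁V.trans hVW).trans hWU)).op (a p.1 • s p.2) = 0 := by
    have := congrArg (F.map (homOfLE hW₁V).op) hg
    simpa only [hcomp.map_sum_smul, map_homOfLE_map_homOfLE, map_zero, hr, hsum] using this
  obtain ⟨W', hyW', hW'W₁, α, hα⟩ :=
    hρgen W₁ (hW₁V.trans hVW) (fun p : κ × Fin n => r p.1 p.2) hrel y hyW₁
  refine ⟨W', hyW', hW'W₁.trans hW₁V, α, fun k => ?_⟩
  calc F.map (homOfLE (hW'W₁.trans hW₁V)).op (g k)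
      = ∑ j, O.map (homOfLE hW'W₁).op (r k j) •
          F.map (homOfLE (hW'W₁.trans ((hW₁V.trans hVW).trans hWU))).op (s j) := by
        rw [← map_homOfLE_map_homOfLE F hW₁V hW'W₁, hr k, hcomp.map_sum_smul]
        simp only [map_homOfLE_map_homOfLE]
    _ = ∑ l, α l • F.map (homOfLE (hW'W₁.trans (hW₁V.trans hVW))).op
          (∑ j, ρ l (k, j) • F.map (homOfLE hWU).op (s j)) := by
        simp only [hα (k, _), hcomp.map_sum_smul, map_homOfLE_map_homOfLE, Finset.sum_smul,
          mul_smul, Finset.smul_sum]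
        exact Finset.sum_comm

theorem RestrictsIntoSpan.sum_smul (hcomp : SMulCompatible O F) {c mm : ℕ}
    {U V W N W' : Opens X} {f : Fin c → O.obj (op U)} {S : Finset (Fin c)} {hNU : N ≤ U}
    {hNW : N ≤ W} {G : Fin mm → F.obj (op W)} (hG : ∀ l, RestrictsIntoSpan O F f S hNU hNW (G l))
    (hW'N : W' ≤ N) (hW'V : W' ≤ V) {m : F.obj (op V)} (α : Fin mm → O.obj (op W'))
    (hm : F.map (homOfLE hW'V).op m = ∑ l, α l • F.map (homOfLE (hW'N.trans hNW)).op (G l)) :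
    RestrictsIntoSpan O F f S (hW'N.trans hNU) hW'V m := by
  choose MM hMM using fun l => (hG l).mono hcomp hW'N
  refine ⟨fun k => ∑ l, α l • MM l k, ?_⟩
  simp only [hm, hMM, Finset.smul_sum, smul_comm (α _)]
  exact Finset.sum_comm

theorem IsRegularStepAt.eventually (hcomp : SMulCompatible O F) (hker : RelationsFiniteType O F)
    {U : Opens X} {n : ℕ} {s : Fin n → F.obj (op U)} (hs : SpansLocally O F s) {c : ℕ}
    {f : Fin c → O.obj (op U)} {i : Fin c} {x : X} (hx : x ∈ U)
    (h : IsRegularStepAt O F f i x) : ∀ᶠ y in 𝓝 x, IsRegularStepAt O F f i y := by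
  have hrel : ∀ {V : Opens X} (hVU : V ≤ U) (g : Fin c → F.obj (op V)),
      ∑ k, O.map (homOfLE hVU).op (if k ≤ i then f k else 0) • g k = 0 ↔
        O.map (homOfLE hVU).op (f i) • g i =
          ∑ k ∈ Finset.univ.filter (· < i), O.map (homOfLE hVU).op (f k) • -g k := by
    intro V hVU g
    simp only [apply_ite (O.map (homOfLE hVU).op), map_zero]
    exact Fin.sum_ite_le_smul_eq_zero_iff i _ g
  obtain ⟨W, hxW, hWU, mm, G, hGrel, hGgen⟩ :=
    exists_generators_ker_sum_smul hcomp hker hs (fun k => if k ≤ i then f k else 0) hx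
  have hGx : ∀ l, ∃ N, x ∈ N ∧ ∃ hNW : N ≤ W,
      RestrictsIntoSpan O F f (Finset.univ.filter (· < i)) (hNW.trans hWU) hNW (G l i) := by
    intro l
    obtain ⟨N, hxN, hNW, hN⟩ := h W hxW hWU (G l i)
      ⟨W, hxW, le_rfl, fun k => -G l k, (restrict_self _).trans ((hrel hWU (G l)).1 (hGrel l))⟩
    exact ⟨N, hxN, hNW, hN⟩
  obtain ⟨N, hNW, hxN, hN⟩ := Opens.exists_le_mem_forall_of_antitone
    (fun l _ _ h ⟨hNW, hN⟩ => ⟨h.trans hNW, hN.mono hcomp h⟩) hxW hGx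
  filter_upwards [N.isOpen.mem_nhds hxN] with y hyN
  rintro V hyV hVU m ⟨W₀, hyW₀, hW₀V, mm', hmm'⟩
  have hW₁V : W₀ ⊓ N ≤ V := inf_le_left.trans hW₀V
  have hW₁W : W₀ ⊓ N ≤ W := inf_le_right.trans hNW
  let g := Function.update (fun k => -F.map (homOfLE inf_le_left).op (mm' k)) i
    (F.map (homOfLE hW₁V).op m)
  have hg : ∑ k, O.map (homOfLE (hW₁W.trans hWU)).op (if k ≤ i then f k else 0) • g k = 0 := by
    have hm := congrArg (F.map (homOfLE (inf_le_left : W₀ ⊓ N ≤ W₀)).op) hmm'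
    simp only [hcomp.map_sum_smul, hcomp _, map_homOfLE_map_homOfLE] at hm
    rw [hrel]
    simp only [g, Function.update_self, hm]
    refine Finset.sum_congr rfl fun k hk => ?_
    rw [Function.update_of_ne (Finset.mem_filter.1 hk).2.ne, neg_neg]
  obtain ⟨W', hyW', hW'W₁, α, hα⟩ := hGgen _ hW₁W g hg y ⟨hyW₀, hyN⟩
  refine ⟨W', hyW', hW'W₁.trans hW₁V, RestrictsIntoSpan.sum_smul hcomp (hNW := hNW)
    (hNU := hNW.trans hWU) (G := fun l => G l i) (fun l => (hN l).2) (hW'W₁.trans inf_le_right)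
    _ α ?_⟩
  rw [← map_homOfLE_map_homOfLE F hW₁V hW'W₁]
  simpa only [g, Function.update_self] using hα i

theorem LocallyGeneratesAt.of_forall_eq_sum {c d : ℕ} {U U' W : Opens X}
    {f : Fin c → O.obj (op U)} {g : Fin d → O.obj (op U')} {y : X}
    (hg : LocallyGeneratesAt X O I g y) (hyW : y ∈ W) (hWU' : W ≤ U') (hWU : W ≤ U)
    (r : Fin d → Fin c → O.obj (op W))
    (hgf : ∀ k, O.map (homOfLE hWU').op (g k) = ∑ j, r k j * O.map (homOfLE hWU).op (f j)) :
    LocallyGeneratesAt X O I f y := by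
  intro V hyV a ha
  obtain ⟨W₁, hyW₁, hW₁V, hW₁U', t, ht⟩ := hg V hyV a ha
  have hW₂W : W₁ ⊓ W ≤ W := inf_le_right
  refine ⟨W₁ ⊓ W, ⟨hyW₁, hyW⟩, inf_le_left.trans hW₁V, hW₂W.trans hWU,
    fun j => ∑ k, O.map (homOfLE inf_le_left).op (t k) * O.map (homOfLE hW₂W).op (r k j), ?_⟩
  calc O.map (homOfLE (inf_le_left.trans hW₁V)).op a
      = ∑ k, O.map (homOfLE inf_le_left).op (t k) *
          O.map (homOfLE hW₂W).op (O.map (homOfLE hWU').op (g k)) := by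
        simpa only [map_sum, map_mul, map_homOfLE_map_homOfLE] using
          congrArg (O.map (homOfLE (inf_le_left : W₁ ⊓ W ≤ W₁)).op) ht
    _ = _ := by
        simp only [hgf, map_sum, map_mul, map_homOfLE_map_homOfLE, Finset.mul_sum,
          Finset.sum_mul, mul_assoc]
        exact Finset.sum_comm

theorem LocallyGeneratesAt.eventually {c d : ℕ} {U U' : Opens X} {f : Fin c → O.obj (op U)}
    {g : Fin d → O.obj (op U')} {x : X} (hf : LocallyGeneratesAt X O I f x)
    (hgI : ∀ k, g k ∈ I (op U')) (hg : ∀ y ∈ U', LocallyGeneratesAt X O I g y) (hx : x ∈ U') :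
    ∀ᶠ y in 𝓝 x, LocallyGeneratesAt X O I f y := by
  have hmono : ∀ k, Antitone fun W : Opens X => ∃ (hWU' : W ≤ U') (hWU : W ≤ U)
      (r : Fin c → O.obj (op W)),
      O.map (homOfLE hWU').op (g k) = ∑ j, r j * O.map (homOfLE hWU).op (f j) := by
    rintro k W₁ W₂ h ⟨hWU', hWU, r, hr⟩
    refine ⟨h.trans hWU', h.trans hWU, fun j => O.map (homOfLE h).op (r j), ?_⟩
    simpa only [map_sum, map_mul, map_homOfLE_map_homOfLE] using
      congrArg (O.map (homOfLE h).op) hr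
  obtain ⟨W₀, hxW₀, -, hW₀U, -⟩ := hf ⊤ trivial 0 (I _).zero_mem
  obtain ⟨W, hW, hxW, hgf⟩ := Opens.exists_le_mem_forall_of_antitone hmono
    (show x ∈ U' ⊓ W₀ from ⟨hx, hxW₀⟩) fun k => by
      obtain ⟨W, hxW, hWU', hWU, r, hr⟩ := hf U' hx (g k) (hgI k)
      exact ⟨W, hxW, hWU', hWU, r, hr⟩
  choose _ _ r hr using hgf
  filter_upwards [W.isOpen.mem_nhds hxW] with y hyW
  exact (hg y (hW hyW).1).of_forall_eq_sum hyW (hW.trans inf_le_left)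
    (hW.trans (inf_le_right.trans hW₀U)) r hr

end

theorem regular_ideal_is_local
    (hcomp : ∀ {U V : (Opens X)ᵒᵖ} (h : U ⟶ V) (r : O.obj U) (m : F.obj U),
      F.map h (r • m) = O.map h r • F.map h m)
    (hIres : ∀ {U V : (Opens X)ᵒᵖ} (h : U ⟶ V), ∀ a ∈ I U, O.map h a ∈ I V)
    -- `F` is of finite type
    (hFft : ∀ x : X, ∃ (U : Opens X) (_ : x ∈ U) (nn : ℕ) (s : Fin nn → F.obj (op U)),
      ∀ (V : Opens X) (hVU : V ≤ U) (m : F.obj (op V)) (y : X), y ∈ V →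
        ∃ (W : Opens X) (_ : y ∈ W) (hWV : W ≤ V) (r : Fin nn → O.obj (op W)),
          F.map (homOfLE hWV).op m = ∑ j, r j • F.map (homOfLE (hWV.trans hVU)).op (s j))
    -- kernels of maps from finite free modules to `F` are of finite type (coherence)
    (hker : ∀ (U : Opens X) (nn : ℕ) (s : Fin nn → F.obj (op U)) (x : X), x ∈ U →
      ∃ (W : Opens X) (_ : x ∈ W) (hWU : W ≤ U) (mm : ℕ)
        (κ : Fin mm → Fin nn → O.obj (op W)),
        (∀ l, ∑ j, κ l j • F.map (homOfLE hWU).op (s j) = 0) ∧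
        ∀ (V : Opens X) (hVW : V ≤ W) (r : Fin nn → O.obj (op V)),
          (∑ j, r j • F.map (homOfLE (hVW.trans hWU)).op (s j) = 0) →
          ∀ (y : X), y ∈ V →
            ∃ (W' : Opens X) (_ : y ∈ W') (hW'V : W' ≤ V) (a : Fin mm → O.obj (op W')),
              ∀ j, O.map (homOfLE hW'V).op (r j) =
                ∑ l, a l * O.map (homOfLE (hW'V.trans hVW)).op (κ l j))
    -- `I` is a finitely generated ideal sheaf
    (hIfg : ∀ x : X, ∃ (U : Opens X) (_ : x ∈ U) (c : ℕ) (f : Fin c → O.obj (op U)),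
      (∀ j, f j ∈ I (op U)) ∧ ∀ y ∈ U, LocallyGeneratesAt X O I f y)
    -- at the point `x`, the stalk `I_x` is generated by an `F_x`-regular sequence
    (x : X)
    (hx : ∃ (U : Opens X) (_ : x ∈ U) (c : ℕ) (f : Fin c → O.obj (op U)),
      (∀ j, f j ∈ I (op U)) ∧ LocallyGeneratesAt X O I f x ∧ RegularSeqAt X O F f x) :
    ∃ (U : Opens X) (_ : x ∈ U) (c : ℕ) (f : Fin c → O.obj (op U)),
      (∀ j, f j ∈ I (op U)) ∧
        ∀ y ∈ U, LocallyGeneratesAt X O I f y ∧ RegularSeqAt X O F f y := by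
  obtain ⟨U₀, hxU₀, n, s, hs⟩ := hFft x
  obtain ⟨U₁, hxU₁, c, f, hfI, hfgen, hfreg⟩ := hx
  obtain ⟨U', hxU', d, g, hgI, hggen⟩ := hIfg x
  have hxU₂ : x ∈ U₀ ⊓ U₁ := ⟨hxU₀, hxU₁⟩
  let f₂ := fun j => O.map (homOfLE (inf_le_right : U₀ ⊓ U₁ ≤ U₁)).op (f j)
  have hev : ∀ᶠ y in 𝓝 x,
      y ∈ U₀ ⊓ U₁ ∧ LocallyGeneratesAt X O I f₂ y ∧ ∀ i, IsRegularStepAt O F f₂ i y :=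
    ((U₀ ⊓ U₁).isOpen.eventually_mem hxU₂).and <|
      ((hfgen.restrict inf_le_right hxU₂).eventually hgI hggen hxU').and <|
        Filter.eventually_all.2 fun i =>
          (((regularSeqAt_iff hcomp f x).1 hfreg i).restrict inf_le_right).eventually hcomp hker
            (SpansLocally.restrict hs inf_le_left) hxU₂
  obtain ⟨t, ht, ht_open, hxt⟩ := eventually_nhds_iff.1 hev
  have hU : (⟨t, ht_open⟩ : Opens X) ≤ U₀ ⊓ U₁ := fun y hy => (ht y hy).1
  exact ⟨⟨t, ht_open⟩, hxt, c, fun j => O.map (homOfLE hU).op (f₂ j),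
    fun j => hIres _ _ (hIres _ _ (hfI j)), fun y hy =>
      ⟨(ht y hy).2.1.restrict hU hy,
        (regularSeqAt_iff hcomp _ y).2 fun i => ((ht y hy).2.2 i).restrict hU⟩⟩
end

section
/- Let i : E' → E be a geometric morphism of topoi. Then there exists a (−1)-truncated object i^∁ ∈ E, the open complement of i, such that for every X ∈ E, the mapping space E(X, i^∁) is contractible if i^*(X) is initial and empty otherwise. Equivalently, the presheaf on E sending X to a point when i^*X is initial and to the empty space otherwise is representable. -/
open CategoryTheory CategoryTheory.Limits

universe u

/-!
The open complement is `i_* ∅`. By adjunction, maps `X ⟶ i_* ∅` correspond to maps `i^* X ⟶ ∅`;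
since initial objects of a topos are strict, such a map exists exactly when `i^* X` is initial,
and there is at most one.
-/

namespace CategoryTheory.Adjunction

variable {C D : Type*} [Category C] [Category D] [HasStrictInitialObjects D]
  {F : C ⥤ D} {G : D ⥤ C}

theorem subsingleton_hom_obj_of_isInitial (adj : F ⊣ G) {I : D} (hI : IsInitial I) (A : C) :
    Subsingleton (A ⟶ G.obj I) :=
  have := hI.subsingleton_to (A := F.obj A)
  (adj.homEquiv A I).symm.subsingleton

theorem nonempty_hom_obj_of_isInitial_iff (adj : F ⊣ G) {I : D} (hI : IsInitial I) (A : C) :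
    Nonempty (A ⟶ G.obj I) ↔ Nonempty (IsInitial (F.obj A)) :=
  ⟨fun ⟨f⟩ => ⟨IsInitial.ofStrict ((adj.homEquiv A I).symm f) hI⟩,
    fun ⟨h⟩ => ⟨adj.homEquiv A I (h.to I)⟩⟩

end CategoryTheory.Adjunction

theorem exists_open_complement_general {C D : Type u} [SmallCategory C] [SmallCategory D]
    (J : GrothendieckTopology C) (K : GrothendieckTopology D)
    (iStar : Sheaf J (Type u) ⥤ Sheaf K (Type u))
    (iLower : Sheaf K (Type u) ⥤ Sheaf J (Type u))
    (adj : iStar ⊣ iLower) :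
    ∃ Uc : Sheaf J (Type u),
      (∀ A : Sheaf J (Type u), Subsingleton (A ⟶ Uc)) ∧
      (∀ A : Sheaf J (Type u),
        (Nonempty (A ⟶ Uc) ↔ Nonempty (IsInitial (iStar.obj A)))) := by
  have : HasInitial (Sheaf K (Type u)) := Sheaf.instHasColimitsOfShape
  exact ⟨iLower.obj (⊥_ _), adj.subsingleton_hom_obj_of_isInitial initialIsInitial,
    adj.nonempty_hom_obj_of_isInitial_iff initialIsInitial⟩

/-- Every geometric morphism of topoi `i : E' → E` (given by an adjunction `i^* ⊣ i_*` with
`i^*` left exact) admits an open complement: a `(-1)`-truncated object `i^∁` of `E` such that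
for every `X`, the mapping space `E(X, i^∁)` is (non-empty and) contractible if `i^* X` is
initial, and empty otherwise. -/
theorem exists_open_complement {C D : Type u} [SmallCategory C] [SmallCategory D]
    (J : GrothendieckTopology C) (K : GrothendieckTopology D)
    (iStar : Sheaf J (Type u) ⥤ Sheaf K (Type u))
    (iLower : Sheaf K (Type u) ⥤ Sheaf J (Type u))
    (adj : iStar ⊣ iLower) [PreservesFiniteLimits iStar] :
    ∃ Uc : Sheaf J (Type u),
      (∀ A : Sheaf J (Type u), Subsingleton (A ⟶ Uc)) ∧
      (∀ A : Sheaf J (Type u),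
        (Nonempty (A ⟶ Uc) ↔ Nonempty (IsInitial (iStar.obj A)))) :=
  exists_open_complement_general J K iStar iLower adj
end

section
/- An adjunction j_! : U ⇄ X : j^*, where U admits pullbacks and j_! preserves pullbacks, is locally Cartesian if and only if its counit is Cartesian, i.e., all naturality squares of the counit j_! j^* → id are pullback squares. -/
open CategoryTheory CategoryTheory.Limits

universe v₁ v₂ u₁ u₂

variable {U : Type u₁} [Category.{v₁} U] {X : Type u₂} [Category.{v₂} X]

/-- An adjunction `j₁ ⊣ js` is locally Cartesian if for every `f : A ⟶ B` in `X` and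
`g : Z ⟶ js.obj B` in `U`, the square comparing `j₁ (js A ×_{js B} Z)` with the pullback of `f`
along `j₁ g ≫ ε_B` is Cartesian. -/
def IsLocallyCartesianAdj [HasPullbacks U] {j₁ : U ⥤ X} {js : X ⥤ U}
    (adj : j₁ ⊣ js) : Prop :=
  ∀ {A B : X} (f : A ⟶ B) {Z : U} (g : Z ⟶ js.obj B),
    IsPullback (j₁.map (pullback.fst (js.map f) g) ≫ adj.counit.app A)
      (j₁.map (pullback.snd (js.map f) g)) f (j₁.map g ≫ adj.counit.app B)

/-- An adjunction `j₁ ⊣ js`, where `U` has pullbacks and `j₁` preserves them, is locally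
Cartesian iff its counit is Cartesian (all naturality squares of the counit are pullbacks). -/
theorem isLocallyCartesian_iff_counit_cartesian [HasPullbacks U]
    (j₁ : U ⥤ X) (js : X ⥤ U) (adj : j₁ ⊣ js)
    [PreservesLimitsOfShape WalkingCospan j₁] :
    IsLocallyCartesianAdj adj ↔
      ∀ {A B : X} (f : A ⟶ B),
        IsPullback (adj.counit.app A) (j₁.map (js.map f)) f (adj.counit.app B) := by
  constructor
  · intro lc A B f
    have h := lc f (𝟙 (js.obj B))
    -- the iso square on the left
    have key : j₁.map (pullback.fst (js.map f) (𝟙 (js.obj B))) ≫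
        j₁.map (js.map f) = j₁.map (pullback.snd (js.map f) (𝟙 (js.obj B))) := by
      rw [← j₁.map_comp, pullback.condition, Category.comp_id]
    have S : IsPullback (inv (j₁.map (pullback.fst (js.map f) (𝟙 (js.obj B)))))
        (j₁.map (js.map f)) (j₁.map (pullback.snd (js.map f) (𝟙 (js.obj B))))
        (𝟙 (j₁.obj (js.obj B))) := by
      apply IsPullback.of_horiz_isIso
      constructor
      rw [Category.comp_id, IsIso.inv_comp_eq, key]
    have := S.paste_horiz h
    simpa using this
  · intro hc A B f Z g
    have left : IsPullback (j₁.map (pullback.fst (js.map f) g))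
        (j₁.map (pullback.snd (js.map f) g)) (j₁.map (js.map f)) (j₁.map g) :=
      (IsPullback.of_hasPullback (js.map f) g).map j₁
    exact left.paste_horiz (hc f)
end

section
/- Let C be a category with finite products and small colimits, with its Cartesian monoidal structure. A small diagram α : K → C is linear (i.e., for every object X the canonical map colim(α × X) → (colim α) × X is an equivalence) if and only if for every morphism X → Y in C, the square with vertices colim(α × X), X, colim(α × Y), Y (horizontal maps induced by projections, vertical maps by X → Y) is Cartesian. -/
/-!
The square for `f : X ⟶ Y` is the horizontal pasting of the naturality square of the comparison
maps `colim (X ⨯ α) ⟶ X ⨯ colim α` with the product square of `X ⨯ colim α ⟶ X` over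
`Y ⨯ colim α ⟶ Y`, which is always Cartesian; so it is Cartesian iff the naturality square is.
If the comparison maps are invertible, the naturality square has invertible horizontal sides.
Conversely, for `Y = ⊤_ C` the functor `⊤_ C ⨯ -` is the identity, so its comparison map is
invertible, and the comparison map for `X` is a pullback of it.
-/

open CategoryTheory CategoryTheory.Limits

universe v u

theorem CategoryTheory.Limits.colimit.post_comp_app {J C D : Type*} [Category J] [Category C]
    [Category D] (F : J ⥤ C) {G G' : C ⥤ D} (τ : G ⟶ G') [HasColimit F] [HasColimit (F ⋙ G)]
    [HasColimit (F ⋙ G')] :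
    colimit.post F G ≫ τ.app (colimit F) =
      colimMap (Functor.whiskerLeft F τ) ≫ colimit.post F G' := by
  ext
  simp

section CartesianLinearity

variable {C : Type u} [Category.{v} C] [HasFiniteProducts C]

noncomputable def CategoryTheory.Limits.prod.functorObjTerminalIso :
    prod.functor.obj (⊤_ C) ≅ 𝟭 C :=
  NatIso.ofComponents (fun X => prod.leftUnitor X) fun f => prod.leftUnitor_hom_naturality f

variable {K : Type*} [Category K] [HasColimitsOfShape K C] (α : K ⥤ C)

instance isIso_colimit_post_prod_terminal :
    IsIso (colimit.post α (prod.functor.obj (⊤_ C))) :=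
  have := preservesColimit_of_natIso α prod.functorObjTerminalIso.symm
  inferInstance

theorem isPullback_colimit_post_prod_fst_iff {X Y : C} (f : X ⟶ Y) :
    IsPullback
        (colimit.post α (prod.functor.obj X) ≫ (prod.fst : X ⨯ colimit α ⟶ X))
        (colimMap (Functor.whiskerLeft α (prod.functor.map f)))
        f
        (colimit.post α (prod.functor.obj Y) ≫ (prod.fst : Y ⨯ colimit α ⟶ Y)) ↔
      IsPullback (colimit.post α (prod.functor.obj X))
        (colimMap (Functor.whiskerLeft α (prod.functor.map f)))
        ((prod.functor.map f).app (colimit α)) (colimit.post α (prod.functor.obj Y)) :=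
  IsPullback.paste_horiz_iff (IsPullback.of_prod_fst_with_id f (colimit α))
    (colimit.post_comp_app α (prod.functor.map f))

end CartesianLinearity

/-- In a category `C` with finite products and small colimits (with its Cartesian monoidal
structure), a small diagram `α : K ⥤ C` is linear — i.e. the canonical comparison map
`colim (X ⨯ α) ⟶ X ⨯ colim α` is an isomorphism for every `X` — if and only if for every
morphism `f : X ⟶ Y` the square with vertices `colim (X ⨯ α)`, `X`, `colim (Y ⨯ α)`, `Y`
(horizontal maps induced by the projections, vertical maps by `f`) is Cartesian. -/
theorem linear_iff_squares_cartesian {C : Type u} [Category.{v} C]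
    [HasFiniteProducts C] [HasColimits C] {K : Type v} [SmallCategory K] (α : K ⥤ C) :
    (∀ X : C, IsIso (colimit.post α (prod.functor.obj X))) ↔
      (∀ {X Y : C} (f : X ⟶ Y),
        IsPullback
          (colimit.post α (prod.functor.obj X) ≫ (prod.fst : X ⨯ colimit α ⟶ X))
          (colimMap (Functor.whiskerLeft α (prod.functor.map f)))
          f
          (colimit.post α (prod.functor.obj Y) ≫ (prod.fst : Y ⨯ colimit α ⟶ Y))) := by
  constructor
  · intro hlinear X Y f
    have := hlinear X
    have := hlinear Y
    rw [isPullback_colimit_post_prod_fst_iff]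
    exact IsPullback.of_horiz_isIso ⟨colimit.post_comp_app α (prod.functor.map f)⟩
  · intro hcartesian X
    exact ((isPullback_colimit_post_prod_fst_iff α (terminal.from X)).1
      (hcartesian (terminal.from X))).isIso_fst_of_isIso
end

section
/- Let f : C → D be a functor between small categories, and let f_! : Psh(C) → Psh(D) be the induced colimit-preserving functor on presheaf categories (left Kan extension along f composed with Yoneda). Then f_! is an equivalence of categories if and only if f is fully faithful and every object of D is a retract of an object in the essential image of f. -/
/-!
If `f_!` is an equivalence, then `f ⋙ yoneda ≅ yoneda ⋙ f_!` is fully faithful, hence so is `f`;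
moreover `yoneda d ≅ f_! P` is the colimit of the representables `yoneda (f c)` indexed by the
elements of `P`, and lifting `𝟙 d` along this colimit exhibits `d` as a retract of some `f c`.
Conversely, if every `d` is a retract of some `f c` and `f` is full, a natural transformation
between presheaves on `D` is determined by, and can be reconstructed from, its components at
the objects `f c`; so restriction along `f` is fully faithful, i.e. the counit of `f_! ⊣ f^*`
is an isomorphism, while its unit is an isomorphism because `f` is fully faithful.
-/

open CategoryTheory Opposite Limits

universe u v u₁ v₁ u₂ v₂

namespace CategoryTheory

section Restriction

variable {C : Type u₁} [Category.{v₁} C] {D : Type u₂} [Category.{v₂} D] {E : Type u} [Category.{v} E]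

lemma NatTrans.app_eq_of_retract {G H : D ⥤ E} (α : G ⟶ H) {d e : D} (h : Retract d e) :
    α.app d = G.map h.i ≫ α.app e ≫ H.map h.r := by
  rw [α.naturality_assoc, ← H.map_comp, h.retract, H.map_id, Category.comp_id]

lemma whiskeringLeft_obj_faithful_of_retract (F : C ⥤ D)
    (hF : ∀ d : D, ∃ c : C, Nonempty (Retract d (F.obj c))) :
    ((Functor.whiskeringLeft C D E).obj F).Faithful where
  map_injective {G H} α β hαβ := by
    ext d
    obtain ⟨c, ⟨h⟩⟩ := hF d
    rw [NatTrans.app_eq_of_retract α h, NatTrans.app_eq_of_retract β h]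
    exact congr_arg (G.map h.i ≫ · ≫ H.map h.r) (congr_app hαβ c)

lemma whiskeringLeft_obj_full_of_retract (F : C ⥤ D) [F.Full]
    (hF : ∀ d : D, ∃ c : C, Nonempty (Retract d (F.obj c))) :
    ((Functor.whiskeringLeft C D E).obj F).Full where
  map_surjective {G H} γ := by
    choose c h using hF
    let h d := (h d).some
    refine ⟨{ app d := G.map (h d).i ≫ γ.app (c d) ≫ H.map (h d).r, naturality := ?_ }, ?_⟩
    · intro d d' u
      -- `u` factors through `F.map v` up to the retractions, and `γ` is natural in `v`
      obtain ⟨v, hv⟩ := F.map_surjective ((h d).r ≫ u ≫ (h d').i)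
      have hγ : G.map ((h d).r ≫ u ≫ (h d').i) ≫ γ.app (c d') =
          γ.app (c d) ≫ H.map ((h d).r ≫ u ≫ (h d').i) := by
        simpa [hv] using γ.naturality v
      calc G.map u ≫ G.map (h d').i ≫ γ.app (c d') ≫ H.map (h d').r
          = G.map (h d).i ≫ G.map ((h d).r ≫ u ≫ (h d').i) ≫ γ.app (c d') ≫
              H.map (h d').r := by
            simp only [← G.map_comp_assoc, Retract.retract_assoc]
        _ = (G.map (h d).i ≫ γ.app (c d) ≫ H.map (h d).r) ≫ H.map u := by
            rw [reassoc_of% hγ]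
            simp only [← H.map_comp, Category.assoc, Retract.retract, Category.comp_id]
    · ext c₀
      obtain ⟨i, hi⟩ := F.map_surjective (h (F.obj c₀)).i
      have hγ := γ.naturality i
      dsimp at hγ ⊢
      rw [← hi, reassoc_of% hγ, ← H.map_comp, hi, Retract.retract, H.map_id, Category.comp_id]

lemma Functor.isEquivalence_lan (L : C ⥤ D) [L.Full] [L.Faithful]
    [∀ F : C ⥤ E, L.HasPointwiseLeftKanExtension F]
    [((Functor.whiskeringLeft C D E).obj L).Full]
    [((Functor.whiskeringLeft C D E).obj L).Faithful] :
    (L.lan : (C ⥤ E) ⥤ (D ⥤ E)).IsEquivalence :=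
  (L.lanAdjunction E).toEquivalence.isEquivalence_functor

end Restriction

lemma exists_retract_of_isColimit_yoneda {D : Type u} [Category.{v} D] {J : Type v}
    [SmallCategory J] {X : J ⥤ D} {t : Cocone (X ⋙ yoneda)} (ht : IsColimit t) {d : D}
    (e : t.pt ≅ yoneda.obj d) : ∃ j, Nonempty (Retract d (X.obj j)) := by
  obtain ⟨j, s, hs⟩ := Types.jointly_surjective _
    (isColimitOfPreserves ((evaluation Dᵒᵖ (Type v)).obj (op d)) ht) (e.inv.app (op d) (𝟙 d))
  obtain ⟨r, hr⟩ := yoneda.map_surjective (t.ι.app j ≫ e.hom)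
  refine ⟨j, ⟨{ i := s, r := r, retract := ?_ }⟩⟩
  calc s ≫ r = (yoneda.map r).app (op d) s := rfl
    _ = e.hom.app (op d) ((t.ι.app j).app (op d) s) := by rw [hr]; rfl
    _ = 𝟙 d := by rw [show (t.ι.app j).app (op d) s = e.inv.app (op d) (𝟙 d) from hs]; simp

section Presheaf

variable {C D : Type u} [SmallCategory C] [SmallCategory D]

noncomputable def Presheaf.compYonedaIsoYonedaCompLan (f : C ⥤ D) :
    f ⋙ yoneda ≅ yoneda ⋙ f.op.lan :=
  Functor.isoWhiskerLeft f uliftYonedaIsoYoneda.{u}.symm ≪≫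
    Presheaf.compULiftYonedaIsoULiftYonedaCompLan.{u} f ≪≫
    Functor.isoWhiskerRight uliftYonedaIsoYoneda.{u} f.op.lan

lemma exists_retract_of_yoneda_mem_essImage {f : C ⥤ D}
    {L : (Cᵒᵖ ⥤ Type u) ⥤ (Dᵒᵖ ⥤ Type u)} [PreservesColimitsOfSize.{u, u} L]
    (e : f ⋙ yoneda ≅ yoneda ⋙ L) {d : D} (hd : L.essImage (yoneda.obj d)) :
    ∃ c, Nonempty (Retract d (f.obj c)) := by
  obtain ⟨P, ⟨eP⟩⟩ := hd
  have ht := (IsColimit.precomposeHomEquiv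
    (Functor.isoWhiskerLeft (CostructuredArrow.proj yoneda P) e) _).symm
      (isColimitOfPreserves L (Presheaf.isColimitTautologicalCocone P))
  obtain ⟨j, h⟩ :=
    exists_retract_of_isColimit_yoneda (X := CostructuredArrow.proj yoneda P ⋙ f) ht eP
  exact ⟨j.left, h⟩

end Presheaf

end CategoryTheory

/-- For a functor `f : C ⥤ D` between small categories, the induced colimit-preserving functor
`f_! : Psh(C) ⥤ Psh(D)` (left Kan extension along `f.op`) is an equivalence iff `f` is fully
faithful and every object of `D` is a retract of an object in the essential image of `f`. -/
theorem lan_isEquivalence_iff {C D : Type u} [SmallCategory C] [SmallCategory D] (f : C ⥤ D) :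
    (f.op.lan : (Cᵒᵖ ⥤ Type u) ⥤ (Dᵒᵖ ⥤ Type u)).IsEquivalence ↔
      (f.Full ∧ f.Faithful ∧
        ∀ d : D, ∃ (c : C) (s : d ⟶ f.obj c) (r : f.obj c ⟶ d), s ≫ r = 𝟙 d) := by
  constructor
  · intro
    have e := Presheaf.compYonedaIsoYonedaCompLan f
    have : (f ⋙ yoneda).Full := Functor.Full.of_iso e.symm
    have : (f ⋙ yoneda).Faithful := Functor.Faithful.of_iso e.symm
    refine ⟨Functor.Full.of_comp_faithful f yoneda, Functor.Faithful.of_comp f yoneda, fun d => ?_⟩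
    obtain ⟨c, ⟨h⟩⟩ :=
      exists_retract_of_yoneda_mem_essImage e (Functor.EssSurj.mem_essImage _ (yoneda.obj d))
    exact ⟨c, h.i, h.r, h.retract⟩
  · rintro ⟨_, _, hd⟩
    have hd' : ∀ d : Dᵒᵖ, ∃ c : Cᵒᵖ, Nonempty (Retract d (f.op.obj c)) := fun d =>
      let ⟨c, s, r, hsr⟩ := hd d.unop
      ⟨op c, ⟨(Retract.mk s r hsr).op⟩⟩
    have := whiskeringLeft_obj_full_of_retract (E := Type u) f.op hd'
    have := whiskeringLeft_obj_faithful_of_retract (E := Type u) f.op hd'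
    exact f.op.isEquivalence_lan
end
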